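/- arXiv:0805.4185 — 5 statements merged into one kernel-verified Lean document; each statement's English description precedes it below -/
import Mathlib

section
/- Let D be a skew field with a subfield K, let E be a D-field containing a free field D_K⦉X⦊, and let F be a D-field. Suppose there exists a specialization from F to E represented by a local homomorphism α such that for every x ∈ X the preimage α⁻¹(x) meets the centralizer C_F(K) of K in F. Then F contains a free field D_K⦉X⦊. -/
/-! # Statement 3

Let `D` be a skew field with a subfield `K`, let `E` be a `D`-field containing a free field
`D_K⦉X⦊`, and let `F` be a `D`-field. Suppose there is a specialization from `F` to `E`
represented by a local homomorphism `α` such that for every `x ∈ X` the preimage `α⁻¹(x)`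
meets the centralizer `C_F(K)` of `K` in `F`. Then `F` contains a free field `D_K⦉X⦊`. -/

/-- An epic `R`-field: a skew field generated, as a field, by the image of `R`. -/
def IsEpicRField {R F : Type} [Ring R] [DivisionRing F] (φ : R →+* F) : Prop :=
  Subfield.closure (Set.range φ) = ⊤

/-- A local homomorphism between the `R`-fields `F` and `E` (with structure maps `φF`, `φE`):
a ring homomorphism from a subring `dom` of `F` containing the image of `R` to `E`,
commuting with the structure maps, such that every element of `dom` outside the kernel is a
unit of `dom`.  (A specialization is an equivalence class of local homomorphisms.) -/
structure LocalHomData (R F E : Type) [Ring R] [DivisionRing F] [DivisionRing E]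
    (φF : R →+* F) (φE : R →+* E) where
  dom : Subring F
  toHom : ↥dom →+* E
  mem_dom : ∀ r : R, φF r ∈ dom
  compat : ∀ r : R, toHom ⟨φF r, mem_dom r⟩ = φE r
  isLocal : ∀ x : ↥dom, toHom x ≠ 0 → IsUnit x

/-- Equivalence of local homomorphisms. -/
def LocalHomData.Equiv {R F E : Type} [Ring R] [DivisionRing F] [DivisionRing E]
    {φF : R →+* F} {φE : R →+* E} (α β : LocalHomData R F E φF φE) : Prop :=
  ∃ (S : Subring F) (hα : S ≤ α.dom) (hβ : S ≤ β.dom),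
    (∀ r : R, φF r ∈ S) ∧
    (∀ x : ↥S, α.toHom (Subring.inclusion hα x) = β.toHom (Subring.inclusion hβ x)) ∧
    (∀ x : ↥S, α.toHom (Subring.inclusion hα x) ≠ 0 → IsUnit x)

/-- A universal `R`-field. -/
def IsUniversalRField (R U : Type) [Ring R] [DivisionRing U] (φ : R →+* U) : Prop :=
  IsEpicRField φ ∧
  ∀ (L : Type) [DivisionRing L], ∀ ψ : R →+* L, IsEpicRField ψ →
    Nonempty (LocalHomData R U L φ ψ) ∧ ∀ α β : LocalHomData R U L φ ψ, α.Equiv β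

/-- The universal field of fractions of `R`. -/
def IsUniversalFieldOfFractions (R U : Type) [Ring R] [DivisionRing U] (φ : R →+* U) : Prop :=
  Function.Injective φ ∧ IsUniversalRField R U φ

/-- `A`, together with `ιD : D →+* A` and `ιX : X → A`, is the free `D_K`-ring on `X`. -/
structure IsFreeDKRingOn (D : Type) [DivisionRing D] (K : Subfield D) (X : Type)
    (A : Type) [Ring A] (ιD : D →+* A) (ιX : X → A) : Prop where
  comm : ∀ a : D, a ∈ K → ∀ x : X, ιD a * ιX x = ιX x * ιD a
  lift : ∀ (B : Type) [Ring B], ∀ (f : D →+* B) (g : X → B),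
    (∀ a : D, a ∈ K → ∀ x : X, f a * g x = g x * f a) →
    ∃! h : A →+* B, h.comp ιD = f ∧ ∀ x : X, h (ιX x) = g x


section Helpers

/-- The corestriction of `f` to the subfield generated by its range is epic. -/
theorem epic_closure_codRestrict {A F : Type} [Ring A] [DivisionRing F] (f : A →+* F) :
    IsEpicRField (f.codRestrict (Subfield.closure (Set.range f))
      fun a => Subfield.subset_closure ⟨a, rfl⟩) := by
  unfold IsEpicRField
  rw [eq_top_iff]
  rintro ⟨x, hx⟩ -
  induction hx using Subfield.closure_induction with
  | mem x hx =>
      obtain ⟨a, rfl⟩ := hx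
      exact Subfield.subset_closure ⟨a, rfl⟩
  | one => exact one_mem _
  | add x y hx hy ihx ihy => exact add_mem ihx ihy
  | neg x hx ihx => exact neg_mem ihx
  | inv x hx ihx => exact inv_mem ihx
  | mul x y hx hy ihx ihy => exact mul_mem ihx ihy

/-- The identity local homomorphism. -/
def LocalHomData.idLH (R U : Type) [Ring R] [DivisionRing U] (φ : R →+* U) :
    LocalHomData R U U φ φ where
  dom := ⊤
  toHom := (⊤ : Subring U).subtype
  mem_dom _ := trivial
  compat _ := rfl
  isLocal x hx := by
    have h : (x : U) ≠ 0 := hx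
    exact ⟨⟨x, ⟨(x : U)⁻¹, trivial⟩, Subtype.ext (mul_inv_cancel₀ h),
      Subtype.ext (inv_mul_cancel₀ h)⟩, rfl⟩

end Helpers

section Comp

variable {R L U M : Type} [Ring R] [DivisionRing L] [DivisionRing U] [DivisionRing M]
  {φL : R →+* L} {φU : R →+* U} {φM : R →+* M}

/-- The domain of the composite of two local homomorphisms. -/
def LocalHomData.compDom (β : LocalHomData R L U φL φU) (γ : LocalHomData R U M φU φM) :
    Subring L :=
  (γ.dom.comap β.toHom).map β.dom.subtype

theorem LocalHomData.mem_compDom {β : LocalHomData R L U φL φU}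
    {γ : LocalHomData R U M φU φM} {x : L} :
    x ∈ β.compDom γ ↔ ∃ h : x ∈ β.dom, β.toHom ⟨x, h⟩ ∈ γ.dom := by
  constructor
  · rintro ⟨y, hy, rfl⟩
    exact ⟨y.2, hy⟩
  · rintro ⟨h, h2⟩
    exact ⟨⟨x, h⟩, h2, rfl⟩

theorem LocalHomData.compDom_le (β : LocalHomData R L U φL φU)
    (γ : LocalHomData R U M φU φM) : β.compDom γ ≤ β.dom := by
  rintro x hx
  exact (LocalHomData.mem_compDom.1 hx).1

theorem LocalHomData.toHom_mem (β : LocalHomData R L U φL φU)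
    (γ : LocalHomData R U M φU φM) (x : ↥(β.compDom γ)) :
    β.toHom (Subring.inclusion (β.compDom_le γ) x) ∈ γ.dom := by
  obtain ⟨h, h2⟩ := LocalHomData.mem_compDom.1 x.2
  exact h2

/-- Composition of local homomorphisms. -/
def LocalHomData.comp (β : LocalHomData R L U φL φU) (γ : LocalHomData R U M φU φM) :
    LocalHomData R L M φL φM where
  dom := β.compDom γ
  toHom := γ.toHom.comp
    ((β.toHom.comp (Subring.inclusion (β.compDom_le γ))).codRestrict γ.dom.toSubsemiring
      (β.toHom_mem γ))
  mem_dom r := LocalHomData.mem_compDom.2 ⟨β.mem_dom r, by rw [β.compat r]; exact γ.mem_dom r⟩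
  compat r := by
    refine Eq.trans ?_ (γ.compat r)
    exact congrArg γ.toHom (Subtype.ext (β.compat r))
  isLocal x hx := by
    have hle := β.compDom_le γ
    set x' : ↥β.dom := Subring.inclusion hle x with hx'def
    have hmem : β.toHom x' ∈ γ.dom := β.toHom_mem γ x
    have hβx : β.toHom x' ≠ 0 := by
      intro h0
      exact hx (by
        show γ.toHom ⟨β.toHom x', hmem⟩ = 0
        rw [show (⟨β.toHom x', hmem⟩ : ↥γ.dom) = 0 from Subtype.ext h0, map_zero])
    obtain ⟨u, hu⟩ := β.isLocal x' hβx
    obtain ⟨w, hw⟩ := γ.isLocal ⟨β.toHom x', hmem⟩ hx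
    have huv1 : β.toHom ↑u * β.toHom ↑u⁻¹ = 1 := by rw [← map_mul, Units.mul_inv, map_one]
    have hbw : ((w : ↥γ.dom) : U) = β.toHom x' := congrArg Subtype.val hw
    have hw1 : (((w⁻¹ : (↥γ.dom)ˣ) : ↥γ.dom) : U) * β.toHom x' = 1 := by
      rw [← hbw]
      exact_mod_cast congrArg Subtype.val w.inv_mul
    have hveq : β.toHom ↑u⁻¹ = (((w⁻¹ : (↥γ.dom)ˣ) : ↥γ.dom) : U) := by
      rw [hu] at huv1
      exact (left_inv_eq_right_inv hw1 huv1).symm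
    have hmemv : ((↑u⁻¹ : ↥β.dom) : L) ∈ β.compDom γ := by
      refine LocalHomData.mem_compDom.2 ⟨(↑u⁻¹ : ↥β.dom).2, ?_⟩
      rw [show (⟨((↑u⁻¹ : ↥β.dom) : L), (↑u⁻¹ : ↥β.dom).2⟩ : ↥β.dom) = ↑u⁻¹ from
        Subtype.ext rfl, hveq]
      exact ((w⁻¹ : (↥γ.dom)ˣ) : ↥γ.dom).2
    refine ⟨⟨x, ⟨_, hmemv⟩, Subtype.ext ?_, Subtype.ext ?_⟩, rfl⟩
    · show (x : L) * ((↑u⁻¹ : ↥β.dom) : L) = 1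
      have h1 : (x : L) = ((u : ↥β.dom) : L) := by rw [hu]; rfl
      rw [h1]
      exact_mod_cast congrArg Subtype.val u.mul_inv
    · show ((↑u⁻¹ : ↥β.dom) : L) * (x : L) = 1
      have h1 : (x : L) = ((u : ↥β.dom) : L) := by rw [hu]; rfl
      rw [h1]
      exact_mod_cast congrArg Subtype.val u.inv_mul

theorem LocalHomData.comp_apply (β : LocalHomData R L U φL φU) (γ : LocalHomData R U M φU φM)
    (x : ↥(β.comp γ).dom) (h1 : (x : L) ∈ β.dom) (h2 : β.toHom ⟨(x : L), h1⟩ ∈ γ.dom) :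
    (β.comp γ).toHom x = γ.toHom ⟨β.toHom ⟨(x : L), h1⟩, h2⟩ := rfl

end Comp

section Universal

theorem isUniversal_of_localHom {R L U : Type} [Ring R] [DivisionRing L] [DivisionRing U]
    {φL : R →+* L} {φU : R →+* U} (hU : IsUniversalRField R U φU) (hL : IsEpicRField φL)
    (β : LocalHomData R L U φL φU) : IsUniversalRField R L φL := by
  obtain ⟨γ⟩ := (hU.2 L φL hL).1
  refine ⟨hL, fun M _ ψ hM => ?_⟩
  obtain ⟨hex, huniq⟩ := hU.2 M ψ hM
  refine ⟨?_, ?_⟩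
  · obtain ⟨γ'⟩ := hex
    exact ⟨β.comp γ'⟩
  · intro δ δ'
    obtain ⟨S', h1, h2, hmem', hagree', hlocal'⟩ := huniq (γ.comp δ) (γ.comp δ')
    set T : Subring L := (S'.comap γ.dom.subtype).map γ.toHom with hT
    have hS'γ : S' ≤ γ.dom := le_trans h1 (γ.compDom_le δ)
    have hTδ : T ≤ δ.dom := by
      rintro _ ⟨y, hy, rfl⟩
      obtain ⟨hg, hd⟩ := LocalHomData.mem_compDom.1 (h1 hy)
      exact hd
    have hTδ' : T ≤ δ'.dom := by
      rintro _ ⟨y, hy, rfl⟩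
      obtain ⟨hg, hd⟩ := LocalHomData.mem_compDom.1 (h2 hy)
      exact hd
    refine ⟨T, hTδ, hTδ', fun r => ⟨⟨φU r, γ.mem_dom r⟩, hmem' r, γ.compat r⟩, ?_, ?_⟩
    · -- agreement
      rintro ⟨_, y, hy, rfl⟩
      have hd : γ.toHom y ∈ δ.dom := hTδ ⟨y, hy, rfl⟩
      have hd' : γ.toHom y ∈ δ'.dom := hTδ' ⟨y, hy, rfl⟩
      have e1 : (γ.comp δ).toHom (Subring.inclusion h1 ⟨(y : U), hy⟩) =
          δ.toHom (Subring.inclusion hTδ ⟨γ.toHom y, ⟨y, hy, rfl⟩⟩) := by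
        rw [LocalHomData.comp_apply γ δ _ y.2 hd]
        rfl
      have e1' : (γ.comp δ').toHom (Subring.inclusion h2 ⟨(y : U), hy⟩) =
          δ'.toHom (Subring.inclusion hTδ' ⟨γ.toHom y, ⟨y, hy, rfl⟩⟩) := by
        rw [LocalHomData.comp_apply γ δ' _ y.2 hd']
        rfl
      rw [← e1, ← e1']
      exact hagree' ⟨(y : U), hy⟩
    · -- locality
      rintro ⟨_, y, hy, rfl⟩ hne
      have hd : γ.toHom y ∈ δ.dom := hTδ ⟨y, hy, rfl⟩
      have e1 : (γ.comp δ).toHom (Subring.inclusion h1 ⟨(y : U), hy⟩) =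
          δ.toHom (Subring.inclusion hTδ ⟨γ.toHom y, ⟨y, hy, rfl⟩⟩) := by
        rw [LocalHomData.comp_apply γ δ _ y.2 hd]
        rfl
      have hu : IsUnit (⟨(y : U), hy⟩ : ↥S') := hlocal' ⟨(y : U), hy⟩ (by rw [e1]; exact hne)
      obtain ⟨v, hv⟩ := hu
      have hvy : ((v : ↥S') : U) = (y : U) := congrArg Subtype.val hv
      set t : ↥S' := ((v⁻¹ : (↥S')ˣ) : ↥S') with ht
      have htg : (t : U) ∈ γ.dom := hS'γ t.2
      have hmul1 : y * ⟨(t : U), htg⟩ = 1 := by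
        refine Subtype.ext ?_
        show (y : U) * (t : U) = 1
        rw [← hvy]
        exact_mod_cast congrArg Subtype.val v.mul_inv
      have hmul2 : (⟨(t : U), htg⟩ : ↥γ.dom) * y = 1 := by
        refine Subtype.ext ?_
        show (t : U) * (y : U) = 1
        rw [← hvy]
        exact_mod_cast congrArg Subtype.val v.inv_mul
      refine ⟨⟨⟨γ.toHom y, ⟨y, hy, rfl⟩⟩, ⟨γ.toHom ⟨(t : U), htg⟩, ⟨⟨(t : U), htg⟩, t.2, rfl⟩⟩,
        Subtype.ext ?_, Subtype.ext ?_⟩, rfl⟩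
      · show γ.toHom y * γ.toHom ⟨(t : U), htg⟩ = 1
        rw [← map_mul, hmul1, map_one]
      · show γ.toHom ⟨(t : U), htg⟩ * γ.toHom y = 1
        rw [← map_mul, hmul2, map_one]

end Universal

theorem contains_free_field_of_specialization
    {D E F A : Type} [DivisionRing D] [DivisionRing E] [DivisionRing F] [Ring A]
    (K : Subfield D) (X : Type)
    -- `E` and `F` are `D`-fields:
    (φE : D →+* E) (φF : D →+* F)
    -- `A` is the free `D_K`-ring on `X`:
    (ιD : D →+* A) (ιX : X → A) (hA : IsFreeDKRingOn D K X A ιD ιX)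
    -- `E` contains the free field `D_K⦉X⦊`, i.e. the subfield of `E` generated by the image
    -- of the `D`-ring homomorphism `fE : A →+* E` is a universal field of fractions of `A`:
    (fE : A →+* E) (hfE : fE.comp ιD = φE)
    (hEuniv : IsUniversalFieldOfFractions A ↥(Subfield.closure (Set.range fE))
      (fE.codRestrict _ fun a => Subfield.subset_closure ⟨a, rfl⟩))
    -- `α` is a local homomorphism (representing a specialization) from `F` to `E`:
    (α : LocalHomData D F E φF φE)
    -- the condition `α⁻¹(x) ∩ C_F(K) ≠ ∅` for every `x ∈ X`:
    (hα : ∀ x : X, ∃ y : ↥α.dom, α.toHom y = fE (ιX x) ∧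
      (y : F) ∈ Subring.centralizer (φF '' (K : Set D))) :
    -- then `F` contains the free field `D_K⦉X⦊`:
    ∃ fF : A →+* F, fF.comp ιD = φF ∧
      IsUniversalFieldOfFractions A ↥(Subfield.closure (Set.range fF))
        (fF.codRestrict _ fun a => Subfield.subset_closure ⟨a, rfl⟩) := by
  classical
  choose y hy1 hy2 using hα
  -- lift the free D_K-ring into the subring `α.dom` of `F`
  have commF : ∀ a : D, a ∈ K → ∀ x : X,
      (φF.codRestrict α.dom α.mem_dom) a * y x = y x * (φF.codRestrict α.dom α.mem_dom) a := by
    intro a ha x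
    refine Subtype.ext ?_
    show φF a * (y x : F) = (y x : F) * φF a
    exact Subring.mem_centralizer_iff.1 (hy2 x) _ ⟨a, ha, rfl⟩
  obtain ⟨hF, ⟨hFD, hFX⟩, -⟩ := hA.lift (↥α.dom) (φF.codRestrict α.dom α.mem_dom) y commF
  set fF : A →+* F := α.dom.subtype.comp hF with hfFdef
  have hFιD : ∀ a : D, hF (ιD a) = (φF.codRestrict α.dom α.mem_dom) a := by
    intro a; rw [← hFD]; rfl
  have hfFD : fF.comp ιD = φF := by
    ext a
    show (hF (ιD a) : F) = φF a
    rw [hFιD a]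
    rfl
  -- `α.toHom ∘ hF = fE` by the uniqueness of the lift to `E`
  have commE : ∀ a : D, a ∈ K → ∀ x : X, φE a * fE (ιX x) = fE (ιX x) * φE a := by
    intro a ha x
    have h : φE a = fE (ιD a) := by rw [← hfE]; rfl
    rw [h, ← map_mul, ← map_mul, hA.comm a ha x]
  obtain ⟨hE, -, hEuniq⟩ := hA.lift E φE (fun x => fE (ιX x)) commE
  have e1 : fE = hE := hEuniq fE ⟨hfE, fun x => rfl⟩
  have e2 : α.toHom.comp hF = hE := by
    refine hEuniq _ ⟨?_, ?_⟩
    · ext a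
      show α.toHom (hF (ιD a)) = φE a
      rw [hFιD a]
      exact α.compat a
    · intro x
      show α.toHom (hF (ιX x)) = fE (ιX x)
      rw [hFX x]
      exact hy1 x
  have hcirc : ∀ a : A, α.toHom (hF a) = fE a := by
    intro a
    rw [show fE a = hE a from by rw [e1], ← e2]
    rfl
  -- injectivity
  have hfEinj : Function.Injective fE := by
    intro a b hab
    exact hEuniv.1 (Subtype.ext hab)
  have hfFinj : Function.Injective fF := by
    intro a b hab
    apply hfEinj
    rw [← hcirc, ← hcirc]
    exact congrArg α.toHom (Subtype.ext hab)
  set UF := Subfield.closure (Set.range fF) with hUFdef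
  set UE := Subfield.closure (Set.range fE) with hUEdef
  -- the domain of the induced local homomorphism from `UF` to `UE`
  set P : Subring F := (UE.toSubring.comap α.toHom).map α.dom.subtype with hPdef
  have memP : ∀ z : F, z ∈ P ↔ ∃ h : z ∈ α.dom, α.toHom ⟨z, h⟩ ∈ UE := by
    intro z
    constructor
    · rintro ⟨w, hw, rfl⟩; exact ⟨w.2, hw⟩
    · rintro ⟨h, h2⟩; exact ⟨⟨z, h⟩, h2, rfl⟩
  set βdom : Subring ↥UF := P.comap UF.subtype with hβdomdef
  have j1 : ∀ x : ↥βdom, ((x : ↥UF) : F) ∈ α.dom := fun x => ((memP _).1 x.2).1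
  set j2 : ↥βdom →+* ↥α.dom :=
    (UF.subtype.comp βdom.subtype).codRestrict α.dom j1 with hj2def
  have j3 : ∀ x : ↥βdom, α.toHom (j2 x) ∈ UE := by
    intro x
    obtain ⟨h, h2⟩ := (memP _).1 x.2
    exact h2
  have hj2 : ∀ x : ↥βdom, (j2 x : F) = ((x : ↥UF) : F) := fun _ => rfl
  -- the fields of the local homomorphism β : UF ⇝ UE over A
  have hmemdom : ∀ a : A,
      (fF.codRestrict UF fun a => Subfield.subset_closure ⟨a, rfl⟩) a ∈ βdom := by
    intro a
    refine (memP _).2 ⟨(hF a).2, show α.toHom (hF a) ∈ UE from ?_⟩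
    rw [hcirc]
    exact Subfield.subset_closure ⟨a, rfl⟩
  have hcompat : ∀ a : A,
      ((α.toHom.comp j2).codRestrict UE j3)
        ⟨(fF.codRestrict UF fun a => Subfield.subset_closure ⟨a, rfl⟩) a, hmemdom a⟩ =
      (fE.codRestrict UE fun a => Subfield.subset_closure ⟨a, rfl⟩) a := by
    intro a
    refine Subtype.ext ?_
    show α.toHom (j2 _) = fE a
    rw [show j2 ⟨(fF.codRestrict UF fun a => Subfield.subset_closure ⟨a, rfl⟩) a, hmemdom a⟩ =
      hF a from Subtype.ext rfl]
    exact hcirc a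
  have hisLocal : ∀ x : ↥βdom, ((α.toHom.comp j2).codRestrict UE j3) x ≠ 0 → IsUnit x := by
    intro x hx
    have hax : α.toHom (j2 x) ≠ 0 := fun h0 => hx (Subtype.ext h0)
    obtain ⟨u, hu⟩ := α.isLocal (j2 x) hax
    have hj2x0 : (j2 x : F) ≠ 0 := by
      intro h0
      exact hax (by rw [show j2 x = 0 from Subtype.ext h0, map_zero])
    set v : ↥α.dom := ((u⁻¹ : (↥α.dom)ˣ) : ↥α.dom) with hv
    have huval : ((u : ↥α.dom) : F) = (j2 x : F) := congrArg Subtype.val hu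
    have hmul1 : (j2 x : F) * (v : F) = 1 := by
      rw [← huval]
      exact_mod_cast congrArg Subtype.val u.mul_inv
    have hmul2 : (v : F) * (j2 x : F) = 1 := by
      rw [← huval]
      exact_mod_cast congrArg Subtype.val u.inv_mul
    have hvUF : (v : F) ∈ UF := by
      have h1 : ((x : ↥UF) : F)⁻¹ = (v : F) := by
        refine inv_eq_of_mul_eq_one_right ?_
        rw [← hj2 x]
        exact hmul1
      rw [← h1]
      exact UF.inv_mem (x : ↥UF).2
    have hαv : α.toHom (j2 x) * α.toHom v = 1 := by
      rw [← map_mul, show j2 x * v = 1 from by rw [← hu]; exact_mod_cast u.mul_inv, map_one]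
    have hvUE : α.toHom v ∈ UE := by
      have h1 : (α.toHom (j2 x))⁻¹ = α.toHom v := inv_eq_of_mul_eq_one_right hαv
      rw [← h1]
      exact UE.inv_mem (j3 x)
    have hvP : (v : F) ∈ P := (memP _).2 ⟨v.2,
      by rw [show (⟨(v : F), v.2⟩ : ↥α.dom) = v from Subtype.ext rfl]; exact hvUE⟩
    refine ⟨⟨x, ⟨⟨(v : F), hvUF⟩, hvP⟩, Subtype.ext (Subtype.ext ?_), Subtype.ext (Subtype.ext ?_)⟩, rfl⟩
    · show ((x : ↥UF) : F) * (v : F) = 1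
      rw [← hj2 x]
      exact hmul1
    · show (v : F) * ((x : ↥UF) : F) = 1
      rw [← hj2 x]
      exact hmul2
  set βhom : LocalHomData A (↥UF) (↥UE)
      (fF.codRestrict UF fun a => Subfield.subset_closure ⟨a, rfl⟩)
      (fE.codRestrict UE fun a => Subfield.subset_closure ⟨a, rfl⟩) :=
    { dom := βdom
      toHom := (α.toHom.comp j2).codRestrict UE j3
      mem_dom := hmemdom
      compat := hcompat
      isLocal := hisLocal } with hβhomdef
  refine ⟨fF, hfFD, ?_, ?_⟩
  · intro a b hab
    exact hfFinj (by simpa using congrArg Subtype.val hab)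
  · exact isUniversal_of_localHom hEuniv.2 (epic_closure_codRestrict fF) βhom
end

section
/- Let R be a ring with a universal field of fractions U, and let F and E be R-fields such that U is an R-subfield of E. If there exists a specialization from F to E, then U is isomorphic (as an R-field) to an R-subfield of F. -/
private lemma aux_epic {R F : Type} [Ring R] [DivisionRing F] (φ : R →+* F) :
    IsEpicRField (φ.codRestrict (Subfield.closure (Set.range φ))
      (fun r => Subfield.subset_closure ⟨r, rfl⟩)) := by
  rw [IsEpicRField, eq_top_iff]
  rintro ⟨x, hx⟩ -
  refine Subfield.closure_induction
    (p := fun y hy => (⟨y, hy⟩ : ↥(Subfield.closure (Set.range φ))) ∈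
      Subfield.closure (Set.range (φ.codRestrict (Subfield.closure (Set.range φ))
        (fun r => Subfield.subset_closure ⟨r, rfl⟩)))) ?_ ?_ ?_ ?_ ?_ ?_ hx
  · rintro _ ⟨r, rfl⟩
    exact Subfield.subset_closure ⟨r, rfl⟩
  · exact one_mem _
  · intro y z hy hz hy' hz'
    exact add_mem hy' hz'
  · intro y hy hy'
    exact neg_mem hy'
  · intro y hy hy'
    exact inv_mem hy'
  · intro y z hy hz hy' hz'
    exact mul_mem hy' hz'

theorem universal_field_of_fractions_embeds_through_specialization
    {R U E F : Type} [Ring R] [DivisionRing U] [DivisionRing E] [DivisionRing F]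
    -- `U` is the universal field of fractions of `R`:
    (φU : R →+* U) (hU : IsUniversalFieldOfFractions R U φU)
    -- `E` and `F` are `R`-fields:
    (φE : R →+* E) (φF : R →+* F)
    -- `U` is an `R`-subfield of `E`:
    (j : U →+* E) (hj : j.comp φU = φE)
    -- there is a specialization from `F` to `E`:
    (hspec : Nonempty (LocalHomData R F E φF φE)) :
    -- then `U` is isomorphic, as an `R`-field, to an `R`-subfield of `F`:
    ∃ i : U →+* F, Function.Injective i ∧ i.comp φU = φF := by
  obtain ⟨-, hepicU, huniv⟩ := hU
  obtain ⟨α⟩ := hspec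
  -- the epic subfield of F generated by φF, and a local hom β0 : U ⇢ LF from universality
  set LF : Subfield F := Subfield.closure (Set.range φF) with hLFdef
  set ψF : R →+* ↥LF := φF.codRestrict LF (fun r => Subfield.subset_closure ⟨r, rfl⟩) with hψFdef
  obtain ⟨β0⟩ := (huniv ↥LF ψF (aux_epic φF)).1
  set g : ↥β0.dom →+* F := LF.subtype.comp β0.toHom with hgdef
  have hg : ∀ r : R, g ⟨φU r, β0.mem_dom r⟩ = φF r := by
    intro r
    show (LF.subtype) (β0.toHom ⟨φU r, β0.mem_dom r⟩) = φF r
    rw [β0.compat r]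
    rfl
  -- the composable part K of U
  set K : Subring U := (α.dom.comap g).map β0.dom.subtype with hKdef
  have hKle : K ≤ β0.dom := by
    rintro x ⟨y, hy, rfl⟩
    exact y.2
  have hcmem : ∀ x : ↥K, g (Subring.inclusion hKle x) ∈ α.dom := by
    rintro ⟨x, hx⟩
    obtain ⟨y, hy, rfl⟩ := hx
    exact hy
  set cres : ↥K →+* ↥α.dom := (g.comp (Subring.inclusion hKle)).codRestrict α.dom hcmem
    with hcresdef
  set c : ↥K →+* E := α.toHom.comp cres with hcdef
  have hcval : ∀ x : ↥K, c x = α.toHom (cres x) := fun _ => rfl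
  have hKφ : ∀ r : R, φU r ∈ K := by
    intro r
    refine Subring.mem_map.mpr ⟨⟨φU r, β0.mem_dom r⟩, Subring.mem_comap.mpr ?_, rfl⟩
    rw [hg r]
    exact α.mem_dom r
  have hcφ : ∀ r : R, c ⟨φU r, hKφ r⟩ = φE r := by
    intro r
    rw [hcval]
    have h1 : cres ⟨φU r, hKφ r⟩ = ⟨φF r, α.mem_dom r⟩ := Subtype.ext (hg r)
    rw [h1]
    exact α.compat r
  -- locality of the composite, with control of the inverse's value
  have hKunit : ∀ x : ↥K, c x ≠ 0 →
      ∃ y : ↥K, x * y = 1 ∧ y * x = 1 ∧ c y = (c x)⁻¹ := by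
    intro x hcx
    set x' : ↥β0.dom := Subring.inclusion hKle x with hx'def
    have hy0 : g x' ∈ α.dom := hcmem x
    have hcx' : α.toHom ⟨g x', hy0⟩ ≠ 0 := by
      intro h
      exact hcx ((hcval x).trans h)
    have hgx : (g x' : F) ≠ 0 := by
      intro h0
      apply hcx'
      rw [show (⟨g x', hy0⟩ : ↥α.dom) = 0 from Subtype.ext h0, map_zero]
    have hβ : β0.toHom x' ≠ 0 := by
      intro h0
      apply hgx
      show LF.subtype (β0.toHom x') = 0
      rw [h0, map_zero]
    obtain ⟨u, hu⟩ := β0.isLocal x' hβ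
    set w : ↥β0.dom := ↑u⁻¹ with hwdef
    have hxw : x' * w = 1 := by rw [← hu]; exact u.mul_inv
    have hwx : w * x' = 1 := by rw [← hu]; exact u.inv_mul
    have hgw : g w = (g x')⁻¹ := by
      have h1 : g x' * g w = 1 := by rw [← map_mul, hxw, map_one]
      exact mul_left_cancel₀ hgx (h1.trans (mul_inv_cancel₀ hgx).symm)
    obtain ⟨v, hv⟩ := α.isLocal ⟨g x', hy0⟩ hcx'
    set z : ↥α.dom := ↑v⁻¹ with hzdef
    have hvz : (⟨g x', hy0⟩ : ↥α.dom) * z = 1 := by rw [← hv]; exact v.mul_inv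
    have hz : (z : F) = (g x')⁻¹ := by
      have h2 : g x' * (z : F) = 1 := congrArg Subtype.val hvz
      exact mul_left_cancel₀ hgx (h2.trans (mul_inv_cancel₀ hgx).symm)
    have hwK : (↑w : U) ∈ K := by
      refine Subring.mem_map.mpr ⟨w, Subring.mem_comap.mpr ?_, rfl⟩
      rw [hgw, ← hz]
      exact z.2
    have hxwv : ((x : U)) * ((w : U)) = 1 := congrArg Subtype.val hxw
    have hwxv : ((w : U)) * ((x : U)) = 1 := congrArg Subtype.val hwx
    refine ⟨⟨↑w, hwK⟩, Subtype.ext hxwv, Subtype.ext hwxv, ?_⟩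
    have hmul : c x * c ⟨↑w, hwK⟩ = 1 := by
      rw [hcval, hcval, ← map_mul]
      have h3 : cres x * cres ⟨↑w, hwK⟩ = 1 := by
        refine Subtype.ext ?_
        show g x' * g (Subring.inclusion hKle ⟨↑w, hwK⟩) = 1
        rw [show Subring.inclusion hKle ⟨↑w, hwK⟩ = w from rfl, ← map_mul, hxw, map_one]
      rw [h3, map_one]
    exact mul_left_cancel₀ hcx (hmul.trans (mul_inv_cancel₀ hcx).symm)
  -- the epic subfield of E generated by φE
  set E' : Subfield E := Subfield.closure (Set.range φE) with hE'def
  set ψE : R →+* ↥E' := φE.codRestrict E' (fun r => Subfield.subset_closure ⟨r, rfl⟩)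
    with hψEdef
  -- the part D of K mapping into E'
  set D : Subring U := ((E'.toSubring.comap c).map K.subtype) with hDdef
  have hDK : D ≤ K := by
    rintro x ⟨y, hy, rfl⟩
    exact y.2
  have hcD : ∀ x : ↥D, c (Subring.inclusion hDK x) ∈ E' := by
    rintro ⟨x, hx⟩
    obtain ⟨y, hy, rfl⟩ := hx
    exact hy
  have hDφ : ∀ r : R, φU r ∈ D := by
    intro r
    refine Subring.mem_map.mpr ⟨⟨φU r, hKφ r⟩, Subring.mem_comap.mpr ?_, rfl⟩
    show c ⟨φU r, hKφ r⟩ ∈ E'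
    rw [hcφ r]
    exact Subfield.subset_closure ⟨r, rfl⟩
  -- δ' : local hom U ⇢ E' obtained by composing β0 and α
  set δ' : LocalHomData R U ↥E' φU ψE :=
  { dom := D
    toHom := (c.comp (Subring.inclusion hDK)).codRestrict E' hcD
    mem_dom := hDφ
    compat := fun r => Subtype.ext (by
      show c (Subring.inclusion hDK ⟨φU r, hDφ r⟩) = φE r
      exact hcφ r)
    isLocal := by
      intro x hx
      have hx' : c (Subring.inclusion hDK x) ≠ 0 := by
        intro h0
        exact hx (Subtype.ext h0)
      obtain ⟨y, hxy, hyx, hcy⟩ := hKunit (Subring.inclusion hDK x) hx'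
      have hyD : (↑y : U) ∈ D := by
        refine Subring.mem_map.mpr ⟨y, Subring.mem_comap.mpr ?_, rfl⟩
        show c y ∈ E'
        rw [hcy]
        exact inv_mem (hcD x)
      have hxyv : ((x : U)) * ((y : U)) = 1 := congrArg Subtype.val hxy
      have hyxv : ((y : U)) * ((x : U)) = 1 := congrArg Subtype.val hyx
      exact ⟨⟨x, ⟨↑y, hyD⟩, Subtype.ext hxyv, Subtype.ext hyxv⟩, rfl⟩ } with hδ'def
  -- γ : the total local hom U → E' coming from j
  have hjE : ∀ x : U, j x ∈ E' := by
    intro x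
    have h1 : Subfield.closure (Set.range φU) ≤ E'.comap j := by
      refine Subfield.closure_le.mpr ?_
      rintro _ ⟨r, rfl⟩
      show j (φU r) ∈ E'
      rw [show j (φU r) = φE r from by rw [← hj]; rfl]
      exact Subfield.subset_closure ⟨r, rfl⟩
    exact h1 (hepicU.ge (Subfield.mem_top x))
  have hjzero : ∀ x : U, j x = 0 → x = 0 := by
    intro x hx
    by_contra h0
    have h1 : (1 : E) = 0 := by
      rw [show (1 : E) = j 1 from (map_one j).symm, ← inv_mul_cancel₀ h0, map_mul, hx, mul_zero]
    exact one_ne_zero h1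
  set γ : LocalHomData R U ↥E' φU ψE :=
  { dom := ⊤
    toHom := (j.comp (Subring.subtype ⊤)).codRestrict E' (fun x => hjE ↑x)
    mem_dom := fun r => Subring.mem_top _
    compat := fun r => Subtype.ext (by
      show j (φU r) = φE r
      rw [← hj]; rfl)
    isLocal := by
      intro x hx
      have h0 : (x : U) ≠ 0 := by
        intro h
        apply hx
        refine Subtype.ext ?_
        show j ↑x = 0
        rw [h, map_zero]
      refine ⟨⟨x, ⟨(↑x)⁻¹, Subring.mem_top _⟩, ?_, ?_⟩, rfl⟩
      · exact Subtype.ext (mul_inv_cancel₀ h0)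
      · exact Subtype.ext (inv_mul_cancel₀ h0) } with hγdef
  -- uniqueness of the specialization U ⇝ E'
  obtain ⟨S, hSγ, hSδ, hSφ, hagree, hSloc⟩ := (huniv ↥E' ψE (aux_epic φE)).2 γ δ'
  have hjc : ∀ (x : U) (hx : x ∈ S) (hK : x ∈ K), j x = c ⟨x, hK⟩ := by
    intro x hx hK
    have h1 := congrArg Subtype.val (hagree ⟨x, hx⟩)
    exact h1
  -- every nonzero element of S is invertible within S, so S is a subfield, hence S = U
  have hSinv : ∀ x ∈ S, x⁻¹ ∈ S := by
    intro x hx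
    by_cases h0 : x = 0
    · rw [h0, inv_zero]; exact S.zero_mem
    have hne : γ.toHom (Subring.inclusion hSγ ⟨x, hx⟩) ≠ 0 := by
      intro h
      exact h0 (hjzero x (congrArg Subtype.val h))
    obtain ⟨u, hu⟩ := hSloc ⟨x, hx⟩ hne
    have h1 : x * ((↑(u⁻¹ : (↥S)ˣ) : ↥S) : U) = 1 := by
      have h2 : (((u : ↥S) : U)) * ((↑(u⁻¹ : (↥S)ˣ) : ↥S) : U) = 1 :=
        congrArg Subtype.val u.mul_inv
      rw [hu] at h2
      exact h2
    have h3 : ((↑(u⁻¹ : (↥S)ˣ) : ↥S) : U) = x⁻¹ :=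
      mul_left_cancel₀ h0 (h1.trans (mul_inv_cancel₀ h0).symm)
    rw [← h3]
    exact (↑(u⁻¹ : (↥S)ˣ) : ↥S).2
  set S' : Subfield U := { toSubring := S, inv_mem' := hSinv } with hS'def
  have hall : ∀ x : U, x ∈ S := by
    intro x
    have h1 : Subfield.closure (Set.range φU) ≤ S' := by
      refine Subfield.closure_le.mpr ?_
      rintro _ ⟨r, rfl⟩
      exact hSφ r
    exact h1 (hepicU.ge (Subfield.mem_top x))
  -- the embedding
  have hallβ : ∀ x : U, x ∈ β0.dom := fun x => hKle (hDK (hSδ (hall x)))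
  set m : U →+* ↥β0.dom :=
  { toFun := fun x => ⟨x, hallβ x⟩
    map_one' := rfl
    map_mul' := fun _ _ => rfl
    map_zero' := rfl
    map_add' := fun _ _ => rfl } with hmdef
  refine ⟨g.comp m, ?_, ?_⟩
  · rw [injective_iff_map_eq_zero]
    intro x hx0
    by_contra h0
    have hK : x ∈ K := hDK (hSδ (hall x))
    have h2 : c ⟨x, hK⟩ = 0 := by
      rw [hcval]
      have h3 : cres ⟨x, hK⟩ = 0 := Subtype.ext hx0
      rw [h3, map_zero]
    exact h0 (hjzero x ((hjc x (hall x) hK).trans h2))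
  · ext r
    exact hg r
end

section
/- Let k be a commutative field and let D be a skew field which is a k-algebra. If the enveloping algebra D ⊗_k D^op is a left noetherian ring, then D does not contain an infinite strictly ascending chain D₁ ⊊ D₂ ⊊ D₃ ⊊ ⋯ of subfields which are k-subalgebras of D. -/
/-! # Statement 5

Let `k` be a commutative field and let `D` be a skew field which is a `k`-algebra. If the
enveloping algebra `D ⊗_k Dᵒᵖ` is a left noetherian ring, then `D` does not contain an
infinite strictly ascending chain `D₁ ⊊ D₂ ⊊ ⋯` of subfields which are `k`-subalgebras
of `D`. -/

open MulOpposite TensorProduct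

theorem exists_functional_pair {K V : Type*} [DivisionRing K] [AddCommGroup V] [Module K V]
    {x y : V} (hxy : x ≠ y)
    (hli : LinearIndependent K ((↑) : ({x, y} : Set V) → V)) :
    ∃ lam : V →ₗ[K] K, lam y = 1 ∧ lam x = 0 := by
  replace hli : LinearIndepOn K id ({x, y} : Set V) := hli
  have hsub := hli.subset_extend (Set.subset_univ _)
  have hxmem : x ∈ hli.extend (Set.subset_univ _) := hsub (Set.mem_insert _ _)
  have hymem : y ∈ hli.extend (Set.subset_univ _) := hsub (Set.mem_insert_of_mem _ rfl)
  set b := Module.Basis.extend hli with hb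
  refine ⟨b.coord ⟨y, hymem⟩, ?_, ?_⟩
  · have h : b ⟨y, hymem⟩ = y := Module.Basis.extend_apply_self hli _
    have key : b.coord ⟨y, hymem⟩ (b ⟨y, hymem⟩) = 1 := by
      rw [Module.Basis.coord_apply, Module.Basis.repr_self, Finsupp.single_eq_same]
    rwa [h] at key
  · have h : b ⟨x, hxmem⟩ = x := Module.Basis.extend_apply_self hli _
    have hne : (⟨x, hxmem⟩ : hli.extend (Set.subset_univ _)) ≠ ⟨y, hymem⟩ :=
      fun hc => hxy (congrArg Subtype.val hc)
    have key : b.coord ⟨y, hymem⟩ (b ⟨x, hxmem⟩) = 0 := by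
      rw [Module.Basis.coord_apply, Module.Basis.repr_self, Finsupp.single_eq_of_ne hne.symm]
    rwa [h] at key

variable {k D : Type} [Field k] [DivisionRing D] [Algebra k D]

@[reducible]
noncomputable def divRingOp (E : Subalgebra k D)
    (hinv : ∀ x ∈ E, x ≠ 0 → x⁻¹ ∈ E) : DivisionRing ↥E.op :=
  { (inferInstance : Ring ↥E.op) with
    inv := fun x => ⟨(x : Dᵐᵒᵖ)⁻¹, by
      rw [Subalgebra.mem_op, unop_inv]
      rcases eq_or_ne (unop (x : Dᵐᵒᵖ)) 0 with h | h
      · simp [h]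
      · exact hinv _ (Subalgebra.mem_op.mp x.2) h⟩
    mul_inv_cancel := fun a ha => Subtype.ext (mul_inv_cancel₀ (fun h0 => ha (Subtype.ext h0)))
    inv_zero := Subtype.ext inv_zero
    nnqsmul := _
    qsmul := _ }

set_option synthInstance.maxHeartbeats 1000000 in
set_option maxHeartbeats 1600000 in
theorem aux_pi (E : Subalgebra k D) (hinv : ∀ x ∈ E, x ≠ 0 → x⁻¹ ∈ E)
    (f : D) (hf : f ∉ E) :
    ∃ piD : D → D, piD 1 = 1 ∧ piD f = 0 ∧
      (∀ (x e : D), e ∈ E → piD (x * e) = piD x * e) ∧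
      (∀ x y : D, piD (x + y) = piD x + piD y) ∧
      (∀ (c : k) (x : D), piD (c • x) = c • piD x) := by
  have h1E : (1 : D) ∈ E := E.one_mem
  have hf0 : f ≠ 0 := fun h => hf (h ▸ E.zero_mem)
  have hf1 : f ≠ 1 := fun h => hf (h ▸ h1E)
  letI : DivisionRing ↥E.op := divRingOp E hinv
  have hsmul : ∀ (a : ↥E.op) (z : Dᵐᵒᵖ), a • z = (a : Dᵐᵒᵖ) * z := fun _ _ => rfl
  have hpair : LinearIndependent ↥E.op ((↑) : ({op f, 1} : Set Dᵐᵒᵖ) → Dᵐᵒᵖ) := by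
    refine linearIndepOn_id_pair (by simpa using hf0) ?_
    intro a ha
    rw [hsmul] at ha
    have hfc : f * unop (a : Dᵐᵒᵖ) = 1 := by
      have := congrArg unop ha
      simpa using this
    have hcne : unop (a : Dᵐᵒᵖ) ≠ 0 := by
      rintro h0; rw [h0, mul_zero] at hfc; exact one_ne_zero hfc.symm
    have huinv : unop (a : Dᵐᵒᵖ) = f⁻¹ := eq_inv_of_mul_eq_one_right hfc
    have : (unop (a : Dᵐᵒᵖ))⁻¹ ∈ E := hinv _ (Subalgebra.mem_op.mp a.2) hcne
    rw [huinv, inv_inv] at this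
    exact hf this
  have hne1 : op f ≠ (1 : Dᵐᵒᵖ) := by
    intro h
    apply hf1
    have := congrArg unop h
    simpa using this
  obtain ⟨lam, hlam1, hlamf⟩ := exists_functional_pair hne1 hpair
  refine ⟨fun x => unop ((lam (op x) : ↥E.op) : Dᵐᵒᵖ), ?_, ?_, ?_, ?_, ?_⟩
  · simp only [op_one, hlam1, OneMemClass.coe_one, unop_one]
  · simp only [hlamf, ZeroMemClass.coe_zero, unop_zero]
  · intro x e he
    have he' : op e ∈ E.op := Subalgebra.mem_op.mpr (by simpa using he)
    have h : op (x * e) = (⟨op e, he'⟩ : ↥E.op) • op x := by rw [hsmul]; simp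
    have step : lam (op (x * e)) = (⟨op e, he'⟩ : ↥E.op) * lam (op x) := by
      rw [h, map_smul, smul_eq_mul]
    show unop ((lam (op (x * e)) : ↥E.op) : Dᵐᵒᵖ) = unop ((lam (op x) : ↥E.op) : Dᵐᵒᵖ) * e
    rw [step, MulMemClass.coe_mul, unop_mul]
    simp
  · intro x y
    have : op (x + y) = op x + op y := rfl
    show unop ((lam (op (x + y)) : ↥E.op) : Dᵐᵒᵖ) =
      unop ((lam (op x) : ↥E.op) : Dᵐᵒᵖ) + unop ((lam (op y) : ↥E.op) : Dᵐᵒᵖ)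
    rw [this, map_add, AddMemClass.coe_add, unop_add]
  · intro c x
    have hz : op (c • x) = (algebraMap k ↥E.op c) • op x := by
      rw [algebraMap_smul (↥E.op) c (op x)]; rfl
    have step : lam (op (c • x)) = algebraMap k ↥E.op c * lam (op x) := by
      rw [hz, map_smul, smul_eq_mul]
    show unop ((lam (op (c • x)) : ↥E.op) : Dᵐᵒᵖ) = c • unop ((lam (op x) : ↥E.op) : Dᵐᵒᵖ)
    rw [step, MulMemClass.coe_mul, Subalgebra.coe_algebraMap, ← Algebra.smul_def, unop_smul]

theorem aux_not_mem (E : Subalgebra k D) (hinv : ∀ x ∈ E, x ≠ 0 → x⁻¹ ∈ E)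
    (f : D) (hf : f ∉ E) :
    f ⊗ₜ[k] (1 : Dᵐᵒᵖ) - 1 ⊗ₜ[k] op f ∉
      Submodule.span (TensorProduct k D Dᵐᵒᵖ)
        ((fun x : D => x ⊗ₜ[k] (1 : Dᵐᵒᵖ) - 1 ⊗ₜ[k] op x) '' E) := by
  obtain ⟨piD, hpi1, hpif, hpimul, hpiadd, hpismul⟩ := aux_pi E hinv f hf
  have hf0 : f ≠ 0 := fun h => hf (h ▸ E.zero_mem)
  -- the bilinear map (x, y) ↦ piD x * unop y
  let B : D →ₗ[k] Dᵐᵒᵖ →ₗ[k] D := LinearMap.mk₂ k (fun x y => piD x * unop y)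
    (fun x₁ x₂ y => by simp only [hpiadd, add_mul])
    (fun c x y => by simp only [hpismul, smul_mul_assoc])
    (fun x y₁ y₂ => by simp only [unop_add, mul_add])
    (fun c x y => by simp only [unop_smul, mul_smul_comm])
  let ψ : TensorProduct k D Dᵐᵒᵖ →ₗ[k] D := TensorProduct.lift B
  have hψ : ∀ (x : D) (y : Dᵐᵒᵖ), ψ (x ⊗ₜ[k] y) = piD x * unop y := fun x y => rfl
  -- the left ideal of elements killed by ψ after arbitrary left multiplication
  let K : Submodule (TensorProduct k D Dᵐᵒᵖ) (TensorProduct k D Dᵐᵒᵖ) :=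
    { carrier := {z | ∀ a, ψ (a * z) = 0}
      add_mem' := fun hx hy a => by rw [mul_add, map_add, hx a, hy a, add_zero]
      zero_mem' := fun a => by rw [mul_zero, map_zero]
      smul_mem' := fun c z hz a => by rw [smul_eq_mul, ← mul_assoc]; exact hz (a * c) }
  have hgen : ((fun x : D => x ⊗ₜ[k] (1 : Dᵐᵒᵖ) - 1 ⊗ₜ[k] op x) '' E : Set _) ⊆ K := by
    rintro _ ⟨e, he, rfl⟩
    intro a
    induction a using TensorProduct.induction_on with
    | zero => rw [zero_mul, map_zero]
    | tmul x y =>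
        rw [mul_sub, Algebra.TensorProduct.tmul_mul_tmul,
          Algebra.TensorProduct.tmul_mul_tmul, map_sub, hψ, hψ]
        simp only [mul_one]
        rw [hpimul x e he, unop_mul, unop_op, mul_assoc, sub_self]
    | add u v hu hv => rw [add_mul, map_add, hu, hv, add_zero]
  intro hmem
  have hK : f ⊗ₜ[k] (1 : Dᵐᵒᵖ) - 1 ⊗ₜ[k] op f ∈ K := Submodule.span_le.mpr hgen hmem
  have := hK 1
  rw [one_mul, map_sub, hψ, hψ, hpi1, hpif, zero_mul, unop_op, one_mul, zero_sub,
    neg_eq_zero] at this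
  exact hf0 this


open MulOpposite TensorProduct in
theorem no_strictly_ascending_chain_of_subfields_of_noetherian_enveloping_algebra
    {k D : Type} [Field k] [DivisionRing D] [Algebra k D]
    -- `D ⊗_k Dᵒᵖ` is left noetherian:
    (hnoeth : IsNoetherianRing (TensorProduct k D Dᵐᵒᵖ)) :
    -- then there is no infinite strictly ascending chain of subfields of `D` which are
    -- `k`-subalgebras (i.e. `k`-subalgebras closed under inverses):
    ¬ ∃ chain : ℕ → Subalgebra k D, StrictMono chain ∧
        ∀ (n : ℕ) (x : D), x ∈ chain n → x ≠ 0 → x⁻¹ ∈ chain n := by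
  rintro ⟨chain, hmono, hcinv⟩
  let I : ℕ →o Submodule (TensorProduct k D Dᵐᵒᵖ) (TensorProduct k D Dᵐᵒᵖ) :=
    ⟨fun n => Submodule.span (TensorProduct k D Dᵐᵒᵖ)
        ((fun x : D => x ⊗ₜ[k] (1 : Dᵐᵒᵖ) - 1 ⊗ₜ[k] op x) '' (chain n)),
      fun m n hmn => Submodule.span_mono (Set.image_mono (hmono.monotone hmn))⟩
  obtain ⟨n, hn⟩ := monotone_stabilizes_iff_noetherian.mpr hnoeth I
  obtain ⟨f, hf1, hf2⟩ := SetLike.exists_of_lt (hmono (Nat.lt_succ_self n))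
  have ht : f ⊗ₜ[k] (1 : Dᵐᵒᵖ) - 1 ⊗ₜ[k] op f ∈ I (n + 1) :=
    Submodule.subset_span ⟨f, hf1, rfl⟩
  rw [← hn (n + 1) (Nat.le_succ n)] at ht
  exact aux_not_mem (chain n) (fun x hx hx0 => hcinv n x hx hx0) f hf2 ht
end

section
/- Let G be a nonabelian finitely generated torsion-free nilpotent group with a fixed central series with infinite cyclic factors, let K be a skew field and σ: G → Aut(K) a group homomorphism. Then the Malcev-Neumann series ring K((G,σ)) is a complete metric space with respect to the metric d(x,y) = c^{ν̂(x−y)} (for any fixed c ∈ (0,1)) induced by the valuation ν̂(x) = min{α₁ : f₁^{α₁}f₂^{α₂}⋯f_r^{α_r} ∈ supp(x)}. -/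
/-! # Statement 11

With `G` a nonabelian finitely generated torsion-free nilpotent group carrying a fixed
central series with infinite cyclic factors, `K` a skew field and `σ : G → Aut(K)` a group
homomorphism: the Malcev–Neumann series ring `K((G,σ))` is a complete metric space with
respect to the metric `d(x,y) = c^(ν̂(x-y))` (for any fixed `c ∈ (0,1)`) induced by the
valuation `ν̂ x = min {α₁ : f₁^{α₁}⋯f_r^{α_r} ∈ supp x}`. -/

/-- A `ℤ ∪ {∞}`-valued valuation function on a ring. -/
structure IsZValuation {R : Type} [Ring R] (ν : R → WithTop ℤ) : Prop where
  map_mul : ∀ x y : R, ν (x * y) = ν x + ν y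
  min_le_add : ∀ x y : R, min (ν x) (ν y) ≤ ν (x + y)
  map_one : ν 1 = 0
  map_zero : ν (0 : R) = ⊤

/-- The lexicographic (strict) order on `G` determined by the normal-form exponents `e`. -/
def lexLt {G : Type} {r : ℕ} (e : G → Fin r → ℤ) (g h : G) : Prop :=
  ∃ i : Fin r, (∀ j : Fin r, j < i → e g j = e h j) ∧ e g i < e h i

/-- The Malcev–Neumann series ring `K((G,σ))` of the ordered group `(G, lt)` over the skew
field `K`, twisted by `σ : G → Aut K`: it consists of the formal series `Σ_{g ∈ G} a_g g`
(encoded by the left-coordinate map `coeff`) whose support is a well-ordered subset of `G`,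
with multiplication induced by `g · a = σ(g)(a) · g`, i.e. given by the convolution formula
`(xy)_g = Σ_{uv=g} x_u σ(u)(y_v)`. -/
structure MalcevNeumannData (K : Type) [DivisionRing K] (G : Type) [Group G]
    (σ : G →* RingAut K) (lt : G → G → Prop) (M : Type) [DivisionRing M] where
  ιK : K →+* M
  ιG : G →* M
  coeff : M → G → K
  coeff_add : ∀ (x y : M) (g : G), coeff (x + y) g = coeff x g + coeff y g
  coeff_injective : Function.Injective coeff
  supp_wellOrdered : ∀ x : M, {g : G | coeff x g ≠ 0}.WellFoundedOn lt
  coeff_surjective : ∀ a : G → K, {g : G | a g ≠ 0}.WellFoundedOn lt → ∃ x : M, coeff x = a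
  coeff_single_self : ∀ (k : K) (g : G), coeff (ιK k * ιG g) g = k
  coeff_single_ne : ∀ (k : K) (g h : G), h ≠ g → coeff (ιK k * ιG g) h = 0
  coeff_mul : ∀ (x y : M) (g : G), coeff (x * y) g =
    ∑ᶠ p : {p : G × G // p.1 * p.2 = g},
      coeff x (p : G × G).1 * σ (p : G × G).1 (coeff y (p : G × G).2)

/-- An element of the Malcev–Neumann ring is finitely supported (i.e. lies in the copy of
the skew group ring `K(G,σ)`) if its support is finite. -/
def MalcevNeumannData.FinSupp {K G M : Type} [DivisionRing K] [Group G] [DivisionRing M]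
    {σ : G →* RingAut K} {lt : G → G → Prop}
    (mn : MalcevNeumannData K G σ lt M) (x : M) : Prop :=
  {g : G | mn.coeff x g ≠ 0}.Finite

open Classical in
/-- The function `ν̂ : K((G,σ)) → ℤ ∪ {∞}`: `ν̂ 0 = ∞` and, for `x ≠ 0`,
`ν̂ x = min {α₁ : f₁^{α₁}⋯f_r^{α_r} ∈ supp x for some α₂, …, α_r}`
(the least first normal-form exponent occurring in the support). -/
noncomputable def mnVal {K G M : Type} [DivisionRing K] [Group G] [DivisionRing M]
    {σ : G →* RingAut K} {lt : G → G → Prop} (mn : MalcevNeumannData K G σ lt M)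
    {r : ℕ} (hr : 0 < r) (e : G → Fin r → ℤ) : M → WithTop ℤ := fun x =>
  if x = 0 then ⊤
  else ((sInf {n : ℤ | ∃ g : G, mn.coeff x g ≠ 0 ∧ e g ⟨0, hr⟩ = n} : ℤ) : WithTop ℤ)


/-- The distance function `d(x,y) = c ^ ν (x - y)` (with `c ^ ∞ = 0`) induced by a
`ℤ`-valued valuation `ν` and a constant `c`. -/
noncomputable def valDist {D : Type} [Ring D] (c : ℝ) (ν : D → WithTop ℤ) (x y : D) : ℝ :=
  WithTop.recTopCoe 0 (fun n : ℤ => c ^ n) (ν (x - y))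

section Aux

variable {K G M : Type} [DivisionRing K] [Group G] [DivisionRing M]
  {σ : G →* RingAut K} {r : ℕ}

theorem mn_coeff_zero {lt : G → G → Prop} (mn : MalcevNeumannData K G σ lt M) (g : G) :
    mn.coeff 0 g = 0 := by
  have h := mn.coeff_add 0 0 g
  rw [add_zero] at h
  exact (left_eq_add.mp h)

theorem mn_coeff_sub {lt : G → G → Prop} (mn : MalcevNeumannData K G σ lt M) (x y : M)
    (g : G) : mn.coeff (x - y) g = mn.coeff x g - mn.coeff y g := by
  have h := mn.coeff_add (x - y) y g
  rw [sub_add_cancel] at h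
  exact eq_sub_of_add_eq h.symm

theorem mn_exists_coeff_ne {lt : G → G → Prop} (mn : MalcevNeumannData K G σ lt M) {x : M}
    (hx : x ≠ 0) : ∃ g : G, mn.coeff x g ≠ 0 := by
  by_contra h
  push_neg at h
  exact hx (mn.coeff_injective (funext fun g => (h g).trans (mn_coeff_zero mn g).symm))

theorem lexLt_of_first_lt (hr : 0 < r) (e : G → Fin r → ℤ) {a b : G}
    (h : e a ⟨0, hr⟩ < e b ⟨0, hr⟩) : lexLt e a b :=
  ⟨⟨0, hr⟩, fun j hj => (Nat.not_lt_zero _ (Fin.lt_def.mp hj)).elim, h⟩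

theorem lexLt_first (hr : 0 < r) (e : G → Fin r → ℤ) {a b : G}
    (h : lexLt e a b) : e a ⟨0, hr⟩ ≤ e b ⟨0, hr⟩ := by
  obtain ⟨i, hj, hi⟩ := h
  rcases lt_or_eq_of_le (show (⟨0, hr⟩ : Fin r) ≤ i from Fin.mk_le_of_le_val (Nat.zero_le _))
    with h0 | h0
  · exact (hj _ h0).le
  · rw [h0]; exact hi.le

theorem mnVal_le (hr : 0 < r) (e : G → Fin r → ℤ)
    (mn : MalcevNeumannData K G σ (lexLt e) M) {x : M} {g : G}
    (hx : mn.coeff x g ≠ 0) : mnVal mn hr e x ≤ (e g ⟨0, hr⟩ : WithTop ℤ) := by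
  have hx0 : x ≠ 0 := fun h => hx (h ▸ mn_coeff_zero mn g)
  rw [mnVal, if_neg hx0, WithTop.coe_le_coe]
  apply csInf_le
  · have hwf := Set.wellFoundedOn_iff.mp (mn.supp_wellOrdered x)
    obtain ⟨g₀, hg₀, hmin⟩ := hwf.has_min {h : G | mn.coeff x h ≠ 0} ⟨g, hx⟩
    refine ⟨e g₀ ⟨0, hr⟩, ?_⟩
    rintro n ⟨h, hh, rfl⟩
    by_contra hlt
    push_neg at hlt
    exact hmin h hh ⟨lexLt_of_first_lt hr e hlt, hh, hg₀⟩
  · exact ⟨g, hx, rfl⟩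

theorem mn_coeff_eq_zero (hr : 0 < r) (e : G → Fin r → ℤ)
    (mn : MalcevNeumannData K G σ (lexLt e) M) {x : M} {n : ℤ}
    (hn : ((n : ℤ) : WithTop ℤ) < mnVal mn hr e x) {g : G} (hg : e g ⟨0, hr⟩ ≤ n) :
    mn.coeff x g = 0 := by
  by_contra h
  exact absurd ((mnVal_le hr e mn h).trans (WithTop.coe_le_coe.mpr hg)) (not_le.mpr hn)

theorem le_mnVal (hr : 0 < r) (e : G → Fin r → ℤ)
    (mn : MalcevNeumannData K G σ (lexLt e) M) {x : M} {n : ℤ}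
    (h : ∀ g : G, e g ⟨0, hr⟩ < n → mn.coeff x g = 0) :
    (n : WithTop ℤ) ≤ mnVal mn hr e x := by
  rw [mnVal]
  split_ifs with hx
  · exact le_top
  · rw [WithTop.coe_le_coe]
    obtain ⟨g, hg⟩ := mn_exists_coeff_ne mn hx
    have hne : Set.Nonempty {m : ℤ | ∃ g' : G, mn.coeff x g' ≠ 0 ∧ e g' ⟨0, hr⟩ = m} :=
      ⟨e g ⟨0, hr⟩, g, hg, rfl⟩
    apply le_csInf hne
    rintro m ⟨g', hg', rfl⟩
    by_contra hlt
    push_neg at hlt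
    exact hg' (h g' hlt)

theorem acc_of_acc_of_closed {α : Type} {rr ss : α → α → Prop} {P : α → Prop}
    (hP : ∀ a b, rr a b → P b → P a) (hrs : ∀ a b, rr a b → P b → ss a b)
    {b : α} (hb : Acc ss b) : P b → Acc rr b := by
  induction hb with
  | intro b _ ih =>
    intro hPb
    exact Acc.intro b fun a hab => ih a (hrs a b hab hPb) (hP a b hab hPb)

end Aux

theorem malcev_neumann_complete
    {K G M : Type} [DivisionRing K] [Group G] [DivisionRing M] [MetricSpace M]
    (σ : G →* RingAut K)
    -- a fixed central series `F 0 = G ⊇ F 1 ⊇ ⋯ ⊇ F r = 1` with infinite cyclic factors,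
    -- given by representatives `f i` and the (unique) normal-form exponents `e g`:
    (r : ℕ) (hr : 0 < r)
    (F : Fin (r + 1) → Subgroup G) (f : Fin r → G) (e : G → Fin r → ℤ)
    (hF0 : F 0 = ⊤) (hFlast : F (Fin.last r) = ⊥)
    (hchain : ∀ i : Fin r, F i.succ ≤ F i.castSucc)
    (hcentral : ∀ i : Fin r, ⁅F i.castSucc, (⊤ : Subgroup G)⁆ ≤ F i.succ)
    (hmem : ∀ i : Fin r, f i ∈ F i.castSucc)
    (hNF : ∀ g : G, g = (List.ofFn fun i : Fin r => f i ^ e g i).prod)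
    (hNFunique : ∀ (g : G) (α : Fin r → ℤ),
      g = (List.ofFn fun i : Fin r => f i ^ α i).prod → α = e g)
    -- `G` is nonabelian:
    (hnonab : ∃ a b : G, a * b ≠ b * a)
    -- `M = K((G,σ))` is the Malcev–Neumann series ring for the lexicographic order:
    (mn : MalcevNeumannData K G σ (lexLt e) M)
    -- the metric on `M` is induced by the valuation `ν̂` via a constant `c ∈ (0,1)`:
    (c : ℝ) (hc : c ∈ Set.Ioo (0 : ℝ) 1)
    (hdist : ∀ x y : M, dist x y = valDist c (mnVal mn hr e) x y) :
    -- then `K((G,σ))` is a complete metric space: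
    CompleteSpace M := by
  obtain ⟨hc0, hc1⟩ := hc
  -- from a small distance, coefficients agree low in the valuation
  have key : ∀ (x y : M) (n : ℤ), dist x y < c ^ n →
      ∀ g : G, e g ⟨0, hr⟩ ≤ n → mn.coeff x g = mn.coeff y g := by
    intro x y n h g hg
    have hlt : ((n : ℤ) : WithTop ℤ) < mnVal mn hr e (x - y) := by
      rw [hdist, valDist] at h
      cases hv : mnVal mn hr e (x - y) with
      | top => exact hv ▸ WithTop.coe_lt_top n
      | coe m =>
        rw [hv, WithTop.recTopCoe_coe] at h
        exact WithTop.coe_lt_coe.mpr ((zpow_lt_zpow_iff_right_of_lt_one₀ hc0 hc1).mp h)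
    have h0 := mn_coeff_eq_zero hr e mn hlt hg
    rw [mn_coeff_sub] at h0
    exact sub_eq_zero.mp h0
  -- conversely, agreement of low coefficients gives a small distance
  have key2 : ∀ (x y : M) (n : ℤ),
      (∀ g : G, e g ⟨0, hr⟩ ≤ n → mn.coeff x g = mn.coeff y g) → dist x y < c ^ n := by
    intro x y n h
    have hle : ((n + 1 : ℤ) : WithTop ℤ) ≤ mnVal mn hr e (x - y) := by
      apply le_mnVal hr e mn
      intro g hg
      rw [mn_coeff_sub, sub_eq_zero]
      exact h g (Int.lt_add_one_iff.mp hg)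
    rw [hdist, valDist]
    cases hv : mnVal mn hr e (x - y) with
    | top => exact zpow_pos hc0 n
    | coe m =>
      rw [hv, WithTop.coe_le_coe] at hle
      rw [WithTop.recTopCoe_coe]
      calc c ^ m ≤ c ^ (n + 1) := (zpow_le_zpow_iff_right_of_lt_one₀ hc0 hc1).mpr hle
        _ < c ^ n := zpow_lt_zpow_right_of_lt_one₀ hc0 hc1 (by omega)
  apply Metric.complete_of_cauchySeq_tendsto
  intro u hu
  rw [Metric.cauchySeq_iff] at hu
  have hN : ∀ n : ℤ, ∃ N : ℕ, ∀ m, N ≤ m → ∀ k, N ≤ k → ∀ g : G, e g ⟨0, hr⟩ ≤ n →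
      mn.coeff (u m) g = mn.coeff (u k) g := by
    intro n
    obtain ⟨N, hN⟩ := hu (c ^ n) (zpow_pos hc0 n)
    exact ⟨N, fun m hm k hk g hg => key (u m) (u k) n (hN m hm k hk) g hg⟩
  choose N hNs using hN
  set a : G → K := fun g => mn.coeff (u (N (e g ⟨0, hr⟩))) g with ha
  have stab : ∀ (n : ℤ) (m : ℕ), N n ≤ m → ∀ g : G, e g ⟨0, hr⟩ ≤ n →
      mn.coeff (u m) g = a g := by
    intro n m hm g hg
    have h1 : mn.coeff (u m) g = mn.coeff (u (max (N n) (N (e g ⟨0, hr⟩)))) g :=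
      hNs n m hm _ (le_max_left _ _) g hg
    have h2 : mn.coeff (u (max (N n) (N (e g ⟨0, hr⟩)))) g =
        mn.coeff (u (N (e g ⟨0, hr⟩))) g :=
      hNs (e g ⟨0, hr⟩) _ (le_max_right _ _) _ le_rfl g le_rfl
    rw [h1, h2]
  -- the limit candidate has well-founded support
  have hwf : {g : G | a g ≠ 0}.WellFoundedOn (lexLt e) := by
    rw [Set.wellFoundedOn_iff]
    constructor
    intro b
    by_cases hb : a b ≠ 0
    · have hwfT := Set.wellFoundedOn_iff.mp (mn.supp_wellOrdered (u (N (e b ⟨0, hr⟩))))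
      refine acc_of_acc_of_closed
        (rr := fun p q => lexLt e p q ∧ p ∈ {g : G | a g ≠ 0} ∧ q ∈ {g : G | a g ≠ 0})
        (P := fun g => a g ≠ 0 ∧ e g ⟨0, hr⟩ ≤ e b ⟨0, hr⟩)
        ?_ ?_ (hwfT.apply b) ⟨hb, le_rfl⟩
      · rintro p q ⟨hpq, hp, _⟩ ⟨_, hq2⟩
        exact ⟨hp, (lexLt_first hr e hpq).trans hq2⟩
      · rintro p q ⟨hpq, hp, hq⟩ ⟨hq1, hq2⟩
        have hmemq : mn.coeff (u (N (e b ⟨0, hr⟩))) q ≠ 0 := by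
          rw [stab (e b ⟨0, hr⟩) _ le_rfl q hq2]; exact hq1
        have hmemp : mn.coeff (u (N (e b ⟨0, hr⟩))) p ≠ 0 := by
          rw [stab (e b ⟨0, hr⟩) _ le_rfl p ((lexLt_first hr e hpq).trans hq2)]; exact hp
        exact ⟨hpq, hmemp, hmemq⟩
    · exact Acc.intro b fun p hp => absurd hp.2.2 hb
  obtain ⟨x, hx⟩ := mn.coeff_surjective a hwf
  refine ⟨x, ?_⟩
  rw [Metric.tendsto_atTop]
  intro ε hε
  obtain ⟨k, hk⟩ := exists_pow_lt_of_lt_one hε hc1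
  refine ⟨N (k : ℤ), fun m hm => ?_⟩
  have hd : dist (u m) x < c ^ (k : ℤ) :=
    key2 (u m) x (k : ℤ) fun g hg => by rw [hx]; exact stab (k : ℤ) m hm g hg
  calc dist (u m) x < c ^ (k : ℤ) := hd
    _ = c ^ k := zpow_natCast c k
    _ < ε := hk
end

section
/- Let H be a nonabelian ordered group, let K be a skew field and let τ: H → Aut(K) be a group homomorphism. Then any field of fractions of the skew group ring K(H,τ) is infinite-dimensional over its centre. -/
/-! # Statement 12

Let `H` be a nonabelian ordered group, let `K` be a skew field and let `τ : H → Aut(K)` be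
a group homomorphism. Then any field of fractions of the skew group ring `K(H,τ)` is
infinite-dimensional over its centre. -/

/-- The skew group ring `K(H,τ)`: the free left `K`-module with basis `H` (encoded by the
coordinate map `coeff`, assigning to each element its unique finitely supported family of
left coordinates), with multiplication induced by `g · a = τ(g)(a) · g`. -/
structure SkewGroupRingData (K : Type) [DivisionRing K] (H : Type) [Group H]
    (τ : H →* RingAut K) (A : Type) [Ring A] where
  ιK : K →+* A
  ιH : H →* A
  coeff : A → (H →₀ K)
  repr : ∀ x : A, x = (coeff x).sum fun g a => ιK a * ιH g
  repr_unique : ∀ (m : H →₀ K) (x : A), x = m.sum (fun g a => ιK a * ιH g) → m = coeff x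
  comm_rule : ∀ (g : H) (a : K), ιH g * ιK a = ιK (τ g a) * ιH g

/-- A ring is infinite-dimensional over its centre: no finite family spans it with
central coefficients. -/
def InfiniteDimOverCenter (D : Type) [Ring D] : Prop :=
  ∀ (n : ℕ) (v : Fin n → D), ∃ x : D, ∀ k : Fin n → D,
    (∀ i, k i ∈ Subring.center D) → x ≠ ∑ i, k i * v i



section Sorting

variable {G : Type*} [Group G] [LinearOrder G]
  [CovariantClass G G (· * ·) (· < ·)]
  [CovariantClass G G (Function.swap (· * ·)) (· < ·)]

/-- Insertion step for the ordered-product lemma. -/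
theorem prod_orderedInsert_aux {ι : Type*} [LinearOrder ι] (q : ι → G)
    (hq : ∀ i j : ι, i < j → q j * q i < q i * q j) :
    ∀ (l : List ι), l.Pairwise (· ≤ ·) → ∀ x : ι,
      (q x * (l.map q).prod ≤ ((List.orderedInsert (· ≤ ·) x l).map q).prod ∧
        ((x :: l).Pairwise (· ≤ ·) ∨
          q x * (l.map q).prod < ((List.orderedInsert (· ≤ ·) x l).map q).prod)) := by
  haveI : CovariantClass G G (· * ·) (· ≤ ·) := covariantClass_le_of_lt _ _ _
  haveI : CovariantClass G G (Function.swap (· * ·)) (· ≤ ·) := covariantClass_le_of_lt _ _ _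
  intro l
  induction l with
  | nil =>
    intro _ x
    simp [List.orderedInsert]
  | cons y l ih =>
    intro hsort x
    rw [List.pairwise_cons] at hsort
    by_cases hxy : x ≤ y
    · constructor
      · simp [List.orderedInsert, hxy, mul_assoc]
      · left
        rw [List.pairwise_cons]
        refine ⟨?_, List.pairwise_cons.2 hsort⟩
        intro b hb
        rcases List.mem_cons.1 hb with h | h
        · exact h ▸ hxy
        · exact le_trans hxy (hsort.1 b h)
    · have hyx : y < x := not_le.1 hxy
      obtain ⟨ih1, _⟩ := ih hsort.2 x
      have key : q x * ((y :: l).map q).prod < ((List.orderedInsert (· ≤ ·) x (y :: l)).map q).prod := by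
        have h1 : q x * q y * (l.map q).prod < q y * q x * (l.map q).prod :=
          mul_lt_mul_left (hq y x hyx) _
        have h2 : q y * (q x * (l.map q).prod) ≤ q y * ((List.orderedInsert (· ≤ ·) x l).map q).prod :=
          mul_le_mul_right ih1 _
        calc q x * ((y :: l).map q).prod = q x * q y * (l.map q).prod := by
              simp [mul_assoc]
          _ < q y * q x * (l.map q).prod := h1
          _ = q y * (q x * (l.map q).prod) := by rw [mul_assoc]
          _ ≤ q y * ((List.orderedInsert (· ≤ ·) x l).map q).prod := h2
          _ = ((List.orderedInsert (· ≤ ·) x (y :: l)).map q).prod := by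
              simp [List.orderedInsert, hxy]
      exact ⟨le_of_lt key, Or.inr key⟩

theorem prod_insertionSort_aux {ι : Type*} [LinearOrder ι] (q : ι → G)
    (hq : ∀ i j : ι, i < j → q j * q i < q i * q j) :
    ∀ (l : List ι),
      ((l.map q).prod ≤ ((List.insertionSort (· ≤ ·) l).map q).prod ∧
        (l.Pairwise (· ≤ ·) ∨ (l.map q).prod < ((List.insertionSort (· ≤ ·) l).map q).prod)) := by
  haveI : CovariantClass G G (· * ·) (· ≤ ·) := covariantClass_le_of_lt _ _ _
  haveI : CovariantClass G G (Function.swap (· * ·)) (· ≤ ·) := covariantClass_le_of_lt _ _ _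
  intro l
  induction l with
  | nil => simp
  | cons x l ih =>
    have hsorted : (List.insertionSort (· ≤ ·) l).Pairwise (· ≤ ·) :=
      List.pairwise_insertionSort _ l
    obtain ⟨o1, o2⟩ := prod_orderedInsert_aux q hq (List.insertionSort (· ≤ ·) l) hsorted x
    have hle : ((x :: l).map q).prod ≤ ((List.insertionSort (· ≤ ·) (x :: l)).map q).prod := by
      calc ((x :: l).map q).prod = q x * (l.map q).prod := by simp
        _ ≤ q x * ((List.insertionSort (· ≤ ·) l).map q).prod := mul_le_mul_right ih.1 _
        _ ≤ ((List.orderedInsert (· ≤ ·) x (List.insertionSort (· ≤ ·) l)).map q).prod := o1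
        _ = ((List.insertionSort (· ≤ ·) (x :: l)).map q).prod := rfl
    refine ⟨hle, ?_⟩
    by_cases hs : (x :: l).Pairwise (· ≤ ·)
    · exact Or.inl hs
    · right
      by_cases hls : l.Pairwise (· ≤ ·)
      · have heq : List.insertionSort (· ≤ ·) l = l := hls.insertionSort_eq
        rw [heq] at o2
        rcases o2 with h | h
        · exact absurd h hs
        · calc ((x :: l).map q).prod = q x * (l.map q).prod := by simp
            _ < ((List.orderedInsert (· ≤ ·) x l).map q).prod := h
            _ = ((List.insertionSort (· ≤ ·) (x :: l)).map q).prod := by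
                show _ = ((List.orderedInsert (· ≤ ·) x (List.insertionSort (· ≤ ·) l)).map q).prod
                rw [heq]
      · have hlt : (l.map q).prod < ((List.insertionSort (· ≤ ·) l).map q).prod :=
          ih.2.resolve_left hls
        calc ((x :: l).map q).prod = q x * (l.map q).prod := by simp
          _ < q x * ((List.insertionSort (· ≤ ·) l).map q).prod := mul_lt_mul_right hlt _
          _ ≤ ((List.insertionSort (· ≤ ·) (x :: l)).map q).prod := o1

/-- For a "positively ordered chain" `q`, any nontrivial permutation strictly
decreases the ordered product. -/
theorem prod_perm_lt {N : ℕ} (q : Fin N → G)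
    (hq : ∀ i j : Fin N, i < j → q j * q i < q i * q j)
    (σ : Equiv.Perm (Fin N)) (hσ : σ ≠ 1) :
    (List.ofFn (fun i => q (σ i))).prod < (List.ofFn q).prod := by
  classical
  set l : List (Fin N) := List.ofFn (fun i => σ i) with hl
  have hperm : List.Perm l (List.finRange N) := by
    rw [hl, List.ofFn_eq_map]
    exact σ.map_finRange_perm
  have hsortedfin : (List.finRange N).Pairwise (· ≤ ·) := List.pairwise_le_finRange N
  have hnotsorted : ¬ l.Pairwise (· ≤ ·) := by
    intro hsl
    have : l = List.finRange N := List.Perm.eq_of_pairwise' hsl hsortedfin hperm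
    apply hσ
    have h2 : List.ofFn (fun i => σ i) = List.ofFn (id : Fin N → Fin N) := by
      rw [List.ofFn_id]; exact this
    have h3 : (fun i => σ i) = (id : Fin N → Fin N) := List.ofFn_injective h2
    exact Equiv.ext fun i => congrFun h3 i
  have hsorteq : List.insertionSort (· ≤ ·) l = List.finRange N :=
    List.Perm.eq_of_pairwise' (List.pairwise_insertionSort _ l) hsortedfin
      ((List.perm_insertionSort _ l).trans hperm)
  have hlt : (l.map q).prod < ((List.insertionSort (· ≤ ·) l).map q).prod :=
    (prod_insertionSort_aux q hq l).2.resolve_left hnotsorted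
  rw [hsorteq] at hlt
  have e1 : l.map q = List.ofFn (fun i => q (σ i)) := by
    rw [hl, List.map_ofFn]; rfl
  have e2 : (List.finRange N).map q = List.ofFn q := (List.ofFn_eq_map).symm
  rw [e1, e2] at hlt
  exact hlt

end Sorting

section Chain
variable {G : Type*} [Group G] [LinearOrder G]
  [CovariantClass G G (· * ·) (· < ·)]
  [CovariantClass G G (Function.swap (· * ·)) (· < ·)]

theorem chain_exists (hnonab : ∃ a b : G, a * b ≠ b * a) (N : ℕ) :
    ∃ q : Fin N → G, ∀ i j : Fin N, i < j → q j * q i < q i * q j := by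
  obtain ⟨x, y, hxy⟩ := hnonab
  obtain ⟨a, b, hab⟩ : ∃ a b : G, a * b < b * a := by
    rcases lt_or_gt_of_ne hxy with h | h
    · exact ⟨x, y, h⟩
    · exact ⟨y, x, h⟩
  refine ⟨fun i => a ^ (i : ℕ) * b, ?_⟩
  intro i j hij
  obtain ⟨k, hk, hkpos⟩ : ∃ k : ℕ, (j : ℕ) = (i : ℕ) + k ∧ k ≠ 0 :=
    ⟨(j : ℕ) - (i : ℕ), by omega, by
      have : (i : ℕ) < (j : ℕ) := hij
      omega⟩
  have h1 : a < b * a * b⁻¹ := by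
    have := mul_lt_mul_left hab b⁻¹
    simpa [mul_assoc] using this
  have h2 : a ^ k < (b * a * b⁻¹) ^ k := pow_lt_pow_left' hkpos h1
  have h3 : (b * a * b⁻¹) ^ k = b * a ^ k * b⁻¹ := conj_pow
  have h4 : a ^ k * b < b * a ^ k := by
    rw [h3] at h2
    have := mul_lt_mul_left h2 b
    simpa [mul_assoc] using this
  have h5 : a ^ (i : ℕ) * (a ^ k * b) * (a ^ (i : ℕ) * b)
      < a ^ (i : ℕ) * (b * a ^ k) * (a ^ (i : ℕ) * b) :=
    mul_lt_mul_left (mul_lt_mul_right h4 _) _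
  calc (a ^ (j : ℕ) * b) * (a ^ (i : ℕ) * b)
      = a ^ (i : ℕ) * (a ^ k * b) * (a ^ (i : ℕ) * b) := by rw [hk, pow_add]; group
    _ < a ^ (i : ℕ) * (b * a ^ k) * (a ^ (i : ℕ) * b) := h5
    _ = (a ^ (i : ℕ) * b) * (a ^ (j : ℕ) * b) := by rw [hk, pow_add]; group

end Chain

theorem skew_group_ring_fraction_field_infinite_dimensional
    {K H A L : Type} [DivisionRing K] [Group H] [Ring A] [DivisionRing L]
    -- `H` is an ordered group:
    [LinearOrder H]
    [CovariantClass H H (· * ·) (· < ·)]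
    [CovariantClass H H (Function.swap (· * ·)) (· < ·)]
    -- `H` is nonabelian:
    (hnonab : ∃ a b : H, a * b ≠ b * a)
    (τ : H →* RingAut K)
    -- `A = K(H,τ)` is the skew group ring:
    (dat : SkewGroupRingData K H τ A)
    -- `L` is a field of fractions of `A`: `A` embeds in `L` and generates it as a field:
    (φ : A →+* L) (hinj : Function.Injective φ)
    (hgen : Subfield.closure (Set.range φ) = ⊤) :
    -- then `L` is infinite-dimensional over its centre:
    InfiniteDimOverCenter L := by
  classical
  intro n v
  by_contra hcon
  push_neg at hcon
  set N := n + 1 with hN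
  obtain ⟨q, hq⟩ := chain_exists hnonab N
  set Z := Subring.center L with hZ
  let f0 : MultilinearMap Z (fun _ : Fin N => L) L := MultilinearMap.mkPiAlgebraFin Z N L
  let F := MultilinearMap.alternatization f0
  set x : Fin N → L := fun i => φ (dat.ιH (q i)) with hx
  -- Part 1: F x = 0 since L is spanned over its centre by the v j.
  have hc : ∀ w : L, ∃ k : Fin n → Z, w = ∑ j, (k j : L) * v j := by
    intro w
    obtain ⟨k, hk1, hk2⟩ := hcon w
    exact ⟨fun j => ⟨k j, hk1 j⟩, hk2⟩
  choose c hcv using fun i => hc (x i)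
  have hx' : ∀ i, x i = ∑ j : Fin n, c i j • v j := by
    intro i
    exact hcv i
  have h1 : F x = 0 := by
    have e1 : F x = F (fun i => ∑ j : Fin n, c i j • v j) := congrArg _ (funext hx')
    rw [e1]
    rw [show F (fun i => ∑ j : Fin n, c i j • v j)
        = F.toMultilinearMap (fun i => ∑ j : Fin n, c i j • v j) from rfl,
      F.toMultilinearMap.map_sum]
    refine Finset.sum_eq_zero fun r _ => ?_
    rw [MultilinearMap.map_smul_univ]
    obtain ⟨i1, i2, hne, heq⟩ := Fintype.exists_ne_map_eq_of_card_lt r (by simp [hN])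
    rw [show F.toMultilinearMap (fun i => v (r i)) = F (fun i => v (r i)) from rfl,
      F.map_eq_zero_of_eq (fun i => v (r i)) (congrArg v heq) hne, smul_zero]
  -- Part 2: F x ≠ 0.
  set p : Equiv.Perm (Fin N) → H := fun σ => (List.ofFn fun i => q (σ i)).prod with hp
  set y : A := ∑ σ : Equiv.Perm (Fin N), ((Equiv.Perm.sign σ : ℤ)) • dat.ιH (p σ) with hy
  have hFx : F x = φ y := by
    rw [MultilinearMap.alternatization_apply]
    rw [hy, map_sum]
    refine Finset.sum_congr rfl fun σ _ => ?_
    rw [MultilinearMap.domDomCongr_apply, MultilinearMap.mkPiAlgebraFin_apply]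
    rw [map_zsmul, Units.smul_def]
    congr 1
    have e2 : (fun i => x (σ i)) = (fun h => φ (dat.ιH h)) ∘ (fun i => q (σ i)) := rfl
    rw [e2, ← List.map_ofFn]
    exact (map_list_prod (φ.toMonoidHom.comp dat.ιH) _).symm
  have hyne : y ≠ 0 := by
    intro hy0
    have hcoeff0 : (0 : H →₀ K) = dat.coeff (0 : A) :=
      dat.repr_unique 0 0 (by simp [Finsupp.sum_zero_index])
    set m : H →₀ K := ∑ σ : Equiv.Perm (Fin N),
      Finsupp.single (p σ) (((Equiv.Perm.sign σ : ℤ) : K)) with hm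
    have hym : y = m.sum fun g a => dat.ιK a * dat.ιH g := by
      rw [hm, ← Finsupp.sum_finsetSum_index (fun g => by simp) (fun g b1 b2 => by rw [map_add, add_mul])]
      refine Finset.sum_congr rfl fun σ _ => ?_
      rw [Finsupp.sum_single_index (by simp), map_intCast dat.ιK, ← zsmul_eq_mul]
    have hmc : m = dat.coeff y := dat.repr_unique m y hym
    rw [hy0, ← hcoeff0] at hmc
    have h1ne : ∀ σ : Equiv.Perm (Fin N), σ ≠ 1 → p σ ≠ p 1 := by
      intro σ hσ
      have hlt := prod_perm_lt q hq σ hσ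
      have hp1 : p 1 = (List.ofFn q).prod := by simp [hp]
      rw [hp1]
      exact ne_of_lt hlt
    have hone : m (p 1) = 1 := by
      rw [hm, Finsupp.finset_sum_apply]
      rw [Finset.sum_eq_single (1 : Equiv.Perm (Fin N))]
      · simp [Finsupp.single_apply]
      · intro σ _ hσ
        rw [Finsupp.single_apply, if_neg (h1ne σ hσ)]
      · intro h
        exact absurd (Finset.mem_univ _) h
    rw [hmc] at hone
    simp at hone
  have h2 : F x ≠ 0 := by
    rw [hFx]
    intro h0
    exact hyne (hinj (by rw [h0, map_zero]))
  exact h2 h1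
end
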